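/- Let I ⊆ ℝ be an open interval containing 0 and let u, v : I → ℝ be differentiable functions with u(0) = v(0) = 1 such that for all t ∈ I one has 0 < u(t) < 2^{1/3}, v(t) > 0, and u'(t) = (2/3)·(2 − u(t)³)/(u(t)³ v(t)³), v'(t) = −(2/3)·(1 − 2u(t)³)/(u(t)⁴ v(t)²). Then for all t ∈ I, v(t) = 1/√(u(t)·(2 − u(t)³)), i.e. the solution lies on the trajectory v = (u(2 − u³))^{−1/2}. -/

import Mathlib

/-!
`H(u, v) = v² u (2 - u³)` is a first integral of the system: along any solution with `u, v ≠ 0`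
its derivative vanishes identically. Hence `H` is constant on the interval, equal to
`H(1, 1) = 1`, and solving `v² u (2 - u³) = 1` for `v > 0` gives the trajectory.
-/

theorem Set.OrdConnected.eq_of_hasDerivAt_eq_zero {E : Type*} [NormedAddCommGroup E]
    [NormedSpace ℝ E] {s : Set ℝ} {f : ℝ → E} (hs : s.OrdConnected)
    (hf : ∀ x ∈ s, HasDerivAt f 0 x) {x y : ℝ} (hx : x ∈ s) (hy : y ∈ s) : f x = f y := by
  have h := (convex_iff_ordConnected.mpr hs).norm_image_sub_le_of_norm_hasDerivWithin_le
    (fun z hz => (hf z hz).hasDerivWithinAt) (fun _ _ => norm_zero.le) hx hy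
  rw [zero_mul, norm_le_zero_iff, sub_eq_zero] at h
  exact h.symm

def firstIntegral (u v : ℝ) : ℝ := v ^ 2 * (u * (2 - u ^ 3))

theorem hasDerivAt_firstIntegral_comp {u v : ℝ → ℝ} {t : ℝ} (hu : u t ≠ 0) (hv : v t ≠ 0)
    (hu' : HasDerivAt u ((2 / 3) * (2 - u t ^ 3) / (u t ^ 3 * v t ^ 3)) t)
    (hv' : HasDerivAt v (-(2 / 3) * (1 - 2 * u t ^ 3) / (u t ^ 4 * v t ^ 2)) t) :
    HasDerivAt (fun s => firstIntegral (u s) (v s)) 0 t := by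
  have h := (hv'.pow 2).mul (hu'.mul ((hasDerivAt_const t (2 : ℝ)).sub (hu'.pow 3)))
  refine h.congr_deriv ?_
  simp only [Pi.mul_apply, Pi.sub_apply, Pi.pow_apply]
  field_simp
  ring

theorem eq_one_div_sqrt_of_sq_mul_eq_one {v x : ℝ} (hv : 0 < v) (h : v ^ 2 * x = 1) :
    v = 1 / Real.sqrt x := by
  have hx : x = (1 / v) ^ 2 := by
    rw [div_pow, one_pow, eq_div_iff (pow_ne_zero 2 hv.ne')]
    linear_combination h
  rw [hx, Real.sqrt_sq (by positivity), one_div_one_div]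

theorem trajectory_of_system
    (I : Set ℝ) (hIconn : I.OrdConnected) (h0I : (0 : ℝ) ∈ I)
    (u v : ℝ → ℝ)
    (hu0 : u 0 = 1) (hv0 : v 0 = 1)
    (hu_pos : ∀ t ∈ I, 0 < u t)
    (hv_pos : ∀ t ∈ I, 0 < v t)
    (hu' : ∀ t ∈ I, HasDerivAt u ((2 / 3) * (2 - u t ^ 3) / (u t ^ 3 * v t ^ 3)) t)
    (hv' : ∀ t ∈ I, HasDerivAt v (-(2 / 3) * (1 - 2 * u t ^ 3) / (u t ^ 4 * v t ^ 2)) t) :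
    ∀ t ∈ I, v t = 1 / Real.sqrt (u t * (2 - u t ^ 3)) := by
  intro t ht
  have hconst : firstIntegral (u t) (v t) = firstIntegral (u 0) (v 0) :=
    hIconn.eq_of_hasDerivAt_eq_zero (f := fun s => firstIntegral (u s) (v s))
      (fun s hs => hasDerivAt_firstIntegral_comp (hu_pos s hs).ne' (hv_pos s hs).ne'
        (hu' s hs) (hv' s hs)) ht h0I
  have hone : firstIntegral (u t) (v t) = 1 := by
    rw [hconst, hu0, hv0, firstIntegral]
    norm_num
  exact eq_one_div_sqrt_of_sq_mul_eq_one (hv_pos t ht) hone
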